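/- Let p be a prime with p ≡ 2 (mod 3) or p = 3, and let i be an integer. Then Σ_{j=0}^{p-1} (j/p)·((i²+3ij+3j²)/p) = 0. -/

import Mathlib

/-!
Writing `χ` for the quadratic character, the sum is `∑ x, χ (x * (i ^ 2 + 3 * i * x + 3 * x ^ 2))`
over `𝔽_p`. If `3 = 0` the argument is `i ^ 2 * x`, and the sum is `χ (i ^ 2)` times `∑ x, χ x = 0`.
Otherwise `x * (i ^ 2 + 3 * i * x + 3 * x ^ 2) = 3 * (x + a) ^ 3 - 3 * a ^ 3` with `a = i / 3`, and
for `p ≡ 2 mod 3` cubing is a bijection of `𝔽_p` since `3` is prime to `p - 1`; so the argument runs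
over all of `𝔽_p` exactly once and the sum is again `∑ x, χ x = 0`.
-/

open Finset Function

theorem ZMod.sum_range_natCast {M : Type*} [AddCommMonoid M] (n : ℕ) [NeZero n]
    (f : ZMod n → M) : ∑ j ∈ range n, f j = ∑ x : ZMod n, f x := by
  refine sum_nbij' (fun j => (j : ZMod n)) ZMod.val (fun _ _ => mem_univ _)
    (fun x _ => mem_range.mpr x.val_lt) (fun j hj => ZMod.val_natCast_of_lt (mem_range.mp hj))
    (fun x _ => ZMod.natCast_zmod_val x) (fun _ _ => rfl)

theorem FiniteField.pow_bijective_of_coprime {K : Type*} [Field K] [Fintype K] {n : ℕ}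
    (hn : n ≠ 0) (hcop : n.Coprime (Fintype.card K - 1)) : Bijective fun x : K => x ^ n := by
  refine Finite.injective_iff_bijective.mp fun x y hxy => ?_
  rcases eq_or_ne y 0 with rfl | hy
  · exact (pow_eq_zero_iff hn).mp (hxy.trans (zero_pow hn))
  have hx : x ≠ 0 := by rintro rfl; exact pow_ne_zero n hy (hxy.symm.trans (zero_pow hn))
  have hpow : (x / y) ^ n = 1 := by rw [div_pow, hxy, div_self (pow_ne_zero n hy)]
  have hcard : (x / y) ^ (Fintype.card K - 1) = 1 :=
    FiniteField.pow_card_sub_one_eq_one _ (div_ne_zero hx hy)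
  simpa [hcop.gcd_eq_one, div_eq_one_iff_eq hy] using pow_gcd_eq_one.mpr ⟨hpow, hcard⟩

section QuadraticCharSum

variable {F : Type*} [Field F] [Fintype F] [DecidableEq F]

theorem sum_quadraticChar_cubic_eq_zero_of_three_eq_zero (hF : ringChar F ≠ 2)
    (h3 : (3 : F) = 0) (i : F) :
    ∑ x : F, quadraticChar F (x * (i ^ 2 + 3 * i * x + 3 * x ^ 2)) = 0 := by
  simp only [h3, zero_mul, add_zero, mul_comm _ (i ^ 2), map_mul, ← mul_sum,
    quadraticChar_sum_zero hF, mul_zero]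

theorem sum_quadraticChar_cubic_eq_zero_of_card_mod_three (hF : ringChar F ≠ 2)
    (hcard : Fintype.card F % 3 = 2) (i : F) :
    ∑ x : F, quadraticChar F (x * (i ^ 2 + 3 * i * x + 3 * x ^ 2)) = 0 := by
  -- `card F = 0` in `F` and `card F ≡ 2 mod 3`, so `3 = 0` would force `2 = 0`.
  have h3 : (3 : F) ≠ 0 := by
    intro h3
    have : ((3 * (Fintype.card F / 3) + 2 : ℕ) : F) = 0 := by
      rw [← FiniteField.cast_card_eq_zero F]; congr 1; omega
    push_cast at this
    exact Ring.two_ne_zero hF (by simpa [h3] using this)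
  have hcube : Bijective fun x : F => x ^ 3 :=
    FiniteField.pow_bijective_of_coprime three_ne_zero
      ((Nat.Prime.coprime_iff_not_dvd Nat.prime_three).mpr (by omega))
  set a := i / 3
  have hshift (x : F) : x * (i ^ 2 + 3 * i * x + 3 * x ^ 2) = 3 * (x + a) ^ 3 - 3 * a ^ 3 := by
    rw [← mul_div_cancel₀ i h3]; ring
  have hbij : Bijective fun x : F => 3 * (x + a) ^ 3 - 3 * a ^ 3 := by
    refine Finite.injective_iff_bijective.mp fun x y hxy => ?_
    simpa using hcube.injective (mul_left_cancel₀ h3 (sub_left_injective hxy))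
  simp only [hshift]
  rw [hbij.sum_comp (quadraticChar F), quadraticChar_sum_zero hF]

end QuadraticCharSum

theorem stmt_5 (p : ℕ) [Fact p.Prime] (hp2 : p ≠ 2)
    (hp : p % 3 = 2 ∨ p = 3) (i : ℤ) :
    ∑ j ∈ Finset.range p,
        legendreSym p j * legendreSym p (i ^ 2 + 3 * i * j + 3 * j ^ 2) = 0 := by
  have hchar : ringChar (ZMod p) ≠ 2 := by rwa [ZMod.ringChar_zmod_n]
  have hterm (j : ℕ) : legendreSym p j * legendreSym p (i ^ 2 + 3 * i * j + 3 * j ^ 2) =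
      quadraticChar (ZMod p) ((j : ZMod p) * ((i : ZMod p) ^ 2 + 3 * i * j + 3 * j ^ 2)) := by
    rw [← legendreSym.mul]; simp [legendreSym]
  rw [sum_congr rfl fun j _ => hterm j, ZMod.sum_range_natCast p fun x : ZMod p =>
    quadraticChar (ZMod p) (x * ((i : ZMod p) ^ 2 + 3 * i * x + 3 * x ^ 2))]
  rcases hp with hp3 | rfl
  · exact sum_quadraticChar_cubic_eq_zero_of_card_mod_three hchar (by rwa [ZMod.card]) _
  · exact sum_quadraticChar_cubic_eq_zero_of_three_eq_zero hchar rfl _
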